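/- Fix an integer s ≥ 2. Let X_1, X_2, … be an i.i.d. sequence of random variables with the Log-Logistic(α;0,1) distribution, α > 0, and for each i ∈ ℕ let Q_{i,s}^{LL} = (1/2)·log(X_{(is, i(s+1)−1)}/X_{(i, i(s+1)−1)})/(H_{is−1} − H_{i−1}) be computed from the first n = i(s+1)−1 observations. Then Q_{i,s}^{LL} converges almost surely to 1/α as i → ∞. -/

import Mathlib

open MeasureTheory ProbabilityTheory Real Filter

/-- The `k`-th order statistic (1-based indexing) of the sample `x : Fin n → ℝ`. -/
noncomputable def orderStat (n : ℕ) (x : Fin n → ℝ) (k : ℕ) : ℝ :=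
  (Multiset.sort ((List.ofFn x : List ℝ) : Multiset ℝ) (· ≤ ·)).getD (k - 1) 0

/-- The cumulative distribution function of the Log-Logistic(α; 0, 1) distribution. -/
noncomputable def logLogisticCDF (α : ℝ) (x : ℝ) : ℝ :=
  if 0 < x then 1 / (1 + x ^ (-α)) else 0

open Finset Topology

/-!
By the strong law of large numbers, almost surely the empirical distribution function of
`X 0, X 1, …` converges to `F = logLogisticCDF α` at every rational point. Since
`orderStat n x k ≤ t` exactly when at least `k` sample points are `≤ t`, an order statistic
whose rank is asymptotically the fraction `p` of the sample converges to the point `q` where `F`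
crosses the level `p`. For the log-logistic law the levels `s/(s+1)` and `1/(s+1)` are crossed
at `s^(1/α)` and `s^(-1/α)`, so the logarithm of the ratio of the two order statistics tends to
`(2/α) log s`, while `H_{is-1} - H_{i-1} → log s` because `H_m - log m` converges.
-/

theorem List.countP_ofFn {α : Type*} {n : ℕ} (x : Fin n → α) (p : α → Bool) :
    (List.ofFn x).countP p = #{j | p (x j)} := by
  rw [List.ofFn_eq_map, List.countP_map, Finset.card_def, Finset.filter_val, Fin.univ_def]
  simp [List.countP_eq_length_filter, Function.comp_def]

theorem List.Pairwise.getElem_le_iff_lt_countP {α : Type*} [LinearOrder α] {l : List α}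
    (hl : l.Pairwise (· ≤ ·)) {i : ℕ} (hi : i < l.length) (t : α) :
    l[i] ≤ t ↔ i < l.countP (· ≤ t) := by
  have hsplit : l = l.take i ++ l[i] :: l.drop (i + 1) := by
    rw [← List.drop_eq_getElem_cons, List.take_append_drop]
  have hpw := hl
  rw [hsplit, List.pairwise_append, List.pairwise_cons] at hpw
  obtain ⟨-, ⟨hhead, -⟩, hcross⟩ := hpw
  have htake : (l.take i).length = i := by simp; omega
  have hcount : l.countP (· ≤ t) = (l.take i).countP (· ≤ t) +
      ((l[i] :: l.drop (i + 1)).countP (· ≤ t)) := by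
    conv_lhs => rw [hsplit]
    exact List.countP_append
  rw [hcount, List.countP_cons]
  by_cases h : l[i] ≤ t
  · have htake_eq : (l.take i).countP (· ≤ t) = i := by
      rw [List.countP_eq_length.2 fun a ha => ?_, htake]
      simpa using (hcross a ha _ List.mem_cons_self).trans h
    simp [h, htake_eq]
  · have hdrop : (l.drop (i + 1)).countP (· ≤ t) = 0 :=
      List.countP_eq_zero.2 fun a ha => by simpa using (lt_of_not_ge h).trans_le (hhead a ha)
    simpa [h, hdrop, htake] using (l.take i).countP_le_length (p := (· ≤ t))

theorem orderStat_le_iff {n : ℕ} (x : Fin n → ℝ) {k : ℕ} (hk : 1 ≤ k) (hkn : k ≤ n) (t : ℝ) :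
    orderStat n x k ≤ t ↔ k ≤ #{j | x j ≤ t} := by
  set l := Multiset.sort ((List.ofFn x : List ℝ) : Multiset ℝ) (· ≤ ·) with hl
  have hperm : l.Perm (List.ofFn x) := Multiset.coe_eq_coe.1 (Multiset.sort_eq _ _)
  have hlen : k - 1 < l.length := by rw [hperm.length_eq, List.length_ofFn]; omega
  rw [orderStat, ← hl, List.getD_eq_getElem _ _ hlen,
    (Multiset.pairwise_sort _ _).getElem_le_iff_lt_countP hlen, hperm.countP_eq, List.countP_ofFn]
  simp only [decide_eq_true_eq]
  omega

noncomputable def empiricalCDF (x : ℕ → ℝ) (n : ℕ) (t : ℝ) : ℝ :=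
  #{j ∈ range n | x j ≤ t} / n

theorem orderStat_le_iff_le_empiricalCDF (x : ℕ → ℝ) {n k : ℕ} (hk : 1 ≤ k) (hkn : k ≤ n)
    (t : ℝ) : orderStat n (fun j => x j) k ≤ t ↔ (k : ℝ) / n ≤ empiricalCDF x n t := by
  have hcard : #{j : Fin n | x j ≤ t} = #{j ∈ range n | x j ≤ t} := by
    simp only [card_filter]
    exact Fin.sum_univ_eq_sum_range (fun j => if x j ≤ t then 1 else 0) n
  have hn : (0 : ℝ) < n := by exact_mod_cast hk.trans hkn
  rw [orderStat_le_iff _ hk hkn, hcard, empiricalCDF, div_le_div_iff_of_pos_right hn, Nat.cast_le]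

section Quantile

variable {ι : Type*} {l : Filter ι} {x : ℕ → ℝ} {n k : ι → ℕ} {p : ℝ}

theorem eventually_lt_orderStat {y a : ℝ}
    (hy : Tendsto (fun i => empiricalCDF x (n i) y) l (𝓝 a)) (hap : a < p)
    (hk : Tendsto (fun i => (k i : ℝ) / n i) l (𝓝 p))
    (hk1 : ∀ᶠ i in l, 1 ≤ k i) (hkn : ∀ᶠ i in l, k i ≤ n i) :
    ∀ᶠ i in l, y < orderStat (n i) (fun j => x j) (k i) := by
  filter_upwards [hy.eventually_lt hk hap, hk1, hkn] with i hi hk1 hkn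
  exact lt_of_not_ge fun h => ((orderStat_le_iff_le_empiricalCDF x hk1 hkn y).1 h).not_gt hi

theorem eventually_orderStat_le {y a : ℝ}
    (hy : Tendsto (fun i => empiricalCDF x (n i) y) l (𝓝 a)) (hpa : p < a)
    (hk : Tendsto (fun i => (k i : ℝ) / n i) l (𝓝 p))
    (hk1 : ∀ᶠ i in l, 1 ≤ k i) (hkn : ∀ᶠ i in l, k i ≤ n i) :
    ∀ᶠ i in l, orderStat (n i) (fun j => x j) (k i) ≤ y := by
  filter_upwards [hk.eventually_lt hy hpa, hk1, hkn] with i hi hk1 hkn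
  exact (orderStat_le_iff_le_empiricalCDF x hk1 hkn y).2 hi.le

def IsUniqueQuantile (F : ℝ → ℝ) (p q : ℝ) : Prop :=
  (∀ y < q, F y < p) ∧ ∀ y > q, p < F y

theorem tendsto_orderStat {F : ℝ → ℝ} {q : ℝ} (hq : IsUniqueQuantile F p q)
    (hx : ∀ t : ℚ, Tendsto (fun i => empiricalCDF x (n i) t) l (𝓝 (F t)))
    (hk : Tendsto (fun i => (k i : ℝ) / n i) l (𝓝 p))
    (hk1 : ∀ᶠ i in l, 1 ≤ k i) (hkn : ∀ᶠ i in l, k i ≤ n i) :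
    Tendsto (fun i => orderStat (n i) (fun j => x j) (k i)) l (𝓝 q) := by
  refine tendsto_order.2 ⟨fun b hb => ?_, fun b hb => ?_⟩
  · obtain ⟨y, hby, hyq⟩ := exists_rat_btwn hb
    filter_upwards [eventually_lt_orderStat (hx y) (hq.1 y hyq) hk hk1 hkn] with i hi
    exact hby.trans hi
  · obtain ⟨y, hqy, hyb⟩ := exists_rat_btwn hb
    filter_upwards [eventually_orderStat_le (hx y) (hq.2 y hqy) hk hk1 hkn] with i hi
    exact hi.trans_lt hyb

end Quantile

theorem ae_tendsto_empiricalCDF {Ω : Type*} [MeasurableSpace Ω] {μ : Measure Ω}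
    [IsProbabilityMeasure μ] {X : ℕ → Ω → ℝ}
    (hindep : Pairwise fun i j => IndepFun (X i) (X j) μ)
    (hident : ∀ k, IdentDistrib (X k) (X 0) μ μ) (t : ℝ) :
    ∀ᵐ ω ∂μ, Tendsto (fun n => empiricalCDF (X · ω) n t) atTop (𝓝 (cdf (μ.map (X 0)) t)) := by
  set f : ℝ → ℝ := (Set.Iic t).indicator 1
  have hf : Measurable f := measurable_one.indicator measurableSet_Iic
  have hX0 : AEMeasurable (X 0) μ := (hident 0).aemeasurable_fst
  have hfint : Integrable f (μ.map (X 0)) := (integrable_const 1).indicator measurableSet_Iic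
  have hslln := strong_law_ae_real (fun k ω => f (X k ω))
    ((integrable_map_measure hf.aestronglyMeasurable hX0).1 hfint)
    (fun i j hij => (hindep hij).comp hf hf) (fun k => (hident k).comp hf)
  have := Measure.isProbabilityMeasure_map hX0
  rw [← integral_map hX0 hf.aestronglyMeasurable, integral_indicator_one measurableSet_Iic,
    ← cdf_eq_real] at hslln
  filter_upwards [hslln] with ω hω
  refine hω.congr fun n => ?_
  simp [empiricalCDF, f, Set.indicator_apply, sum_boole]

theorem ae_forall_rat_tendsto_empiricalCDF {Ω : Type*} [MeasurableSpace Ω] {μ : Measure Ω}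
    [IsProbabilityMeasure μ] {X : ℕ → Ω → ℝ} {F : ℝ → ℝ} (hmeas : ∀ k, Measurable (X k))
    (hindep : Pairwise fun i j => IndepFun (X i) (X j) μ)
    (hdist : ∀ k x, μ {ω | X k ω ≤ x} = ENNReal.ofReal (F x)) (hF : ∀ x, 0 ≤ F x) :
    ∀ᵐ ω ∂μ, ∀ t : ℚ, Tendsto (fun n => empiricalCDF (X · ω) n t) atTop (𝓝 (F t)) := by
  have hlaw : ∀ k, μ.map (X k) = μ.map (X 0) := fun k => by
    refine Measure.ext_of_Iic _ _ fun t => ?_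
    rw [Measure.map_apply (hmeas k) measurableSet_Iic,
      Measure.map_apply (hmeas 0) measurableSet_Iic]
    exact (hdist k t).trans (hdist 0 t).symm
  have hcdf : ∀ t, cdf (μ.map (X 0)) t = F t := fun t => by
    have := Measure.isProbabilityMeasure_map (μ := μ) (hmeas 0).aemeasurable
    rw [cdf_eq_real, map_measureReal_apply (hmeas 0) measurableSet_Iic, measureReal_def]
    exact (congrArg ENNReal.toReal (hdist 0 t)).trans (ENNReal.toReal_ofReal (hF t))
  refine ae_all_iff.2 fun t => ?_
  simpa only [hcdf] using ae_tendsto_empiricalCDF hindep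
    (fun k => ⟨(hmeas k).aemeasurable, (hmeas 0).aemeasurable, hlaw k⟩) t

theorem tendsto_natCast_mul_sub_div_mul_sub {a b : ℕ} (ha : 0 < a) (hb : 0 < b) (c d : ℕ) :
    Tendsto (fun i : ℕ => ((i * a - c : ℕ) : ℝ) / ((i * b - d : ℕ) : ℝ)) atTop
      (𝓝 ((a : ℝ) / b)) := by
  have hlim : Tendsto (fun i : ℕ => ((a : ℝ) - c / i) / (b - d / i)) atTop
      (𝓝 (((a : ℝ) - 0) / (b - 0))) :=
    (tendsto_const_nhds.sub (tendsto_const_div_atTop_nhds_zero_nat _)).div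
      (tendsto_const_nhds.sub (tendsto_const_div_atTop_nhds_zero_nat _)) (by simp; omega)
  rw [sub_zero, sub_zero] at hlim
  refine hlim.congr' ?_
  filter_upwards [eventually_ge_atTop (c + d + 1)] with i hi
  have hc : c ≤ i * a := by nlinarith
  have hd : d ≤ i * b := by nlinarith
  have hi0 : (i : ℝ) ≠ 0 := by norm_cast; omega
  rw [Nat.cast_sub hc, Nat.cast_sub hd]
  field_simp
  push_cast
  ring

theorem tendsto_harmonic_sub_harmonic {ι : Type*} {l : Filter ι} {u v : ι → ℕ} {r : ℝ}
    (hu : Tendsto u l atTop) (hv : Tendsto v l atTop)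
    (huv : Tendsto (fun i => (u i : ℝ) / v i) l (𝓝 r)) (hr : r ≠ 0) :
    Tendsto (fun i => (harmonic (u i) : ℝ) - harmonic (v i)) l (𝓝 (log r)) := by
  have h := ((tendsto_harmonic_sub_log.comp hu).sub (tendsto_harmonic_sub_log.comp hv)).add
    (huv.log hr)
  rw [sub_self, zero_add] at h
  refine h.congr' ?_
  filter_upwards [hu.eventually_gt_atTop 0, hv.eventually_gt_atTop 0] with i hui hvi
  rw [Function.comp_apply, Function.comp_apply, log_div (by positivity) (by positivity)]
  ring

theorem tendsto_harmonic_mul_sub_one_sub_harmonic_sub_one {s : ℕ} (hs : 0 < s) :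
    Tendsto (fun i : ℕ => (harmonic (i * s - 1) : ℝ) - harmonic (i - 1)) atTop (𝓝 (log s)) := by
  simpa using tendsto_harmonic_sub_harmonic
    (tendsto_atTop_mono (fun i => by have := Nat.le_mul_of_pos_right i hs; omega)
      (tendsto_sub_atTop_nat 1))
    (tendsto_sub_atTop_nat 1)
    (by simpa using tendsto_natCast_mul_sub_div_mul_sub (b := 1) hs one_pos 1 1)
    (by positivity)

theorem logLogisticCDF_nonneg (α x : ℝ) : 0 ≤ logLogisticCDF α x := by
  unfold logLogisticCDF
  split_ifs <;> positivity

theorem logLogisticCDF_lt_logLogisticCDF {α x y : ℝ} (hα : 0 < α) (hy : 0 < y) (hxy : x < y) :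
    logLogisticCDF α x < logLogisticCDF α y := by
  unfold logLogisticCDF
  rw [if_pos hy]
  split_ifs with hx
  · have : y ^ (-α) < x ^ (-α) := rpow_lt_rpow_of_neg hx hxy (neg_neg_of_pos hα)
    gcongr
  · positivity

theorem logLogisticCDF_rpow_div {α a b : ℝ} (hα : 0 < α) (ha : 0 < a) (hb : 0 < b) :
    logLogisticCDF α ((a / b) ^ (1 / α)) = a / (a + b) := by
  rw [logLogisticCDF, if_pos (by positivity), ← rpow_mul (by positivity),
    one_div_mul_eq_div, neg_div, div_self hα.ne', rpow_neg_one, inv_div]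
  field_simp

theorem isUniqueQuantile_logLogisticCDF {α a b : ℝ} (hα : 0 < α) (ha : 0 < a) (hb : 0 < b) :
    IsUniqueQuantile (logLogisticCDF α) (a / (a + b)) ((a / b) ^ (1 / α)) := by
  have hq : 0 < (a / b) ^ (1 / α) := by positivity
  rw [← logLogisticCDF_rpow_div hα ha hb]
  exact ⟨fun y hy => logLogisticCDF_lt_logLogisticCDF hα hq hy,
    fun y hy => logLogisticCDF_lt_logLogisticCDF hα (hq.trans hy) hy⟩

theorem tendsto_orderStat_logLogistic {α : ℝ} (hα : 0 < α) {x : ℕ → ℝ}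
    (hx : ∀ t : ℚ, Tendsto (fun m => empiricalCDF x m t) atTop (𝓝 (logLogisticCDF α t)))
    {a b : ℕ} (ha : 0 < a) (hb : 0 < b) :
    Tendsto (fun i => orderStat (i * (a + b) - 1) (fun j => x j) (i * a)) atTop
      (𝓝 (((a : ℝ) / b) ^ (1 / α))) := by
  have hn : Tendsto (fun i : ℕ => i * (a + b) - 1) atTop atTop :=
    tendsto_atTop_mono (fun i => Nat.sub_le_sub_right (Nat.le_mul_of_pos_right i (by omega)) 1)
      (tendsto_sub_atTop_nat 1)
  have hrank : ∀ i : ℕ, 1 ≤ i → 1 ≤ i * a ∧ i * a ≤ i * (a + b) - 1 := fun i hi => by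
    have : 1 ≤ i * b := Nat.one_le_iff_ne_zero.2 (by positivity)
    refine ⟨Nat.one_le_iff_ne_zero.2 (by positivity), ?_⟩
    rw [mul_add]
    omega
  refine tendsto_orderStat (n := fun i => i * (a + b) - 1) (k := fun i => i * a)
    (isUniqueQuantile_logLogisticCDF hα (by positivity) (by positivity)) (fun t => (hx t).comp hn)
    ?_ (eventually_ge_atTop 1 |>.mono fun i hi => (hrank i hi).1)
    (eventually_ge_atTop 1 |>.mono fun i hi => (hrank i hi).2)
  simpa using tendsto_natCast_mul_sub_div_mul_sub (b := a + b) ha (by omega) 0 1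

/-- For fixed `s ≥ 2` and an i.i.d. sequence from the
Log-Logistic(α;0,1) distribution, the estimators
`Q_{i,s}^{LL} = (1/2) log(X_{(is,n)}/X_{(i,n)}) / (H_{is-1} - H_{i-1})`,
computed from the first `n = i(s+1)-1` observations, converge almost surely
to `1/α` as `i → ∞`. -/
theorem stmt1 {Ω : Type*} [MeasurableSpace Ω] (μ : Measure Ω) [IsProbabilityMeasure μ]
    (s : ℕ) (hs : 2 ≤ s) (α : ℝ) (hα : 0 < α)
    (X : ℕ → Ω → ℝ) (hmeas : ∀ k, Measurable (X k))
    (hindep : iIndepFun X μ)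
    (hdist : ∀ k x, μ {ω | X k ω ≤ x} = ENNReal.ofReal (logLogisticCDF α x)) :
    ∀ᵐ ω ∂μ, Tendsto (fun i : ℕ =>
        (1 / 2) * Real.log
          (orderStat (i * (s + 1) - 1) (fun j => X j ω) (i * s) /
            orderStat (i * (s + 1) - 1) (fun j => X j ω) i) /
          ((harmonic (i * s - 1) : ℝ) - (harmonic (i - 1) : ℝ)))
      atTop (nhds (1 / α)) := by
  filter_upwards [ae_forall_rat_tendsto_empiricalCDF hmeas (fun i j hij => hindep.indepFun hij)
    hdist (logLogisticCDF_nonneg α)] with ω hω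
  have hs0 : (0 : ℝ) < s := by positivity
  have hupper : Tendsto (fun i => orderStat (i * (s + 1) - 1) (fun j => X j ω) (i * s)) atTop
      (𝓝 ((s : ℝ) ^ (1 / α))) := by
    simpa using tendsto_orderStat_logLogistic hα hω (a := s) (b := 1) (by omega) one_pos
  have hlower : Tendsto (fun i => orderStat (i * (s + 1) - 1) (fun j => X j ω) i) atTop
      (𝓝 ((s : ℝ)⁻¹ ^ (1 / α))) := by
    have := tendsto_orderStat_logLogistic hα hω (a := 1) (b := s) one_pos (by omega)
    rw [add_comm 1 s] at this
    simpa using this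
  have hlog : log s ≠ 0 := (log_pos (by exact_mod_cast hs)).ne'
  have hlim := (((hupper.div hlower (by positivity)).log (by positivity)).const_mul (1 / 2)).div
    (tendsto_harmonic_mul_sub_one_sub_harmonic_sub_one (s := s) (by omega)) hlog
  have hval : 1 / 2 * log ((s : ℝ) ^ (1 / α) / (s : ℝ)⁻¹ ^ (1 / α)) / log s = 1 / α := by
    rw [inv_rpow hs0.le, div_inv_eq_mul, ← sq, log_pow, log_rpow hs0, Nat.cast_ofNat]
    field_simp
  rwa [hval] at hlim
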